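/- For every p ≥ 1 and λ > 0, every minimizer Ω of E_{p,λ} in the class A satisfies the stationarity identity ∫_Ω dist(x, ∂Ω)^p dx = (λ/(p+2)) · H¹(∂Ω)/H²(Ω). -/

import Mathlib

open MeasureTheory Metric Set Filter
open scoped Topology ENNReal NNReal

/-- The plane `ℝ²`. -/
abbrev Plane := EuclideanSpace ℝ (Fin 2)

/-- The average-distance term `∫_Ω dist(x, ∂Ω)^p dx`. -/
noncomputable def distInt (p : ℝ) (Ω : Set Plane) : ℝ :=
  ∫ x in Ω, infDist x (frontier Ω) ^ p ∂μH[2]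

/-- The perimeter `H¹(∂Ω)`. -/
noncomputable def perim (Ω : Set Plane) : ℝ :=
  (μH[1] (frontier Ω)).toReal

/-- The area `H²(Ω)`. -/
noncomputable def area (Ω : Set Plane) : ℝ :=
  (μH[2] Ω).toReal

/-- The energy `E_{p,λ}(Ω) = ∫_Ω dist(x,∂Ω)^p dx + λ H¹(∂Ω)/H²(Ω)`. -/
noncomputable def energy (p lam : ℝ) (Ω : Set Plane) : ℝ :=
  distInt p Ω + lam * (perim Ω / area Ω)

/-- The admissible class `A`: compact, convex subsets of `ℝ²` of Hausdorff dimension 2. -/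
def Adm (Ω : Set Plane) : Prop :=
  IsCompact Ω ∧ Convex ℝ Ω ∧ dimH Ω = 2

/-!
Dilations preserve the admissible class, multiply the distance integral by `t ^ (p + 2)` and the
ratio `H¹(∂Ω) / H²(Ω)` by `t⁻¹`. Hence `t ↦ E(t • Ω)` has a local minimum at `t = 1` for a
minimizer `Ω`, and the vanishing of its derivative there is the stationarity identity.
-/

open scoped Pointwise

theorem frontier_smul₀ {G₀ α : Type*} [GroupWithZero G₀] [MulAction G₀ α] [TopologicalSpace α]
    [ContinuousConstSMul G₀ α] {c : G₀} (hc : c ≠ 0) (s : Set α) :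
    frontier (c • s) = c • frontier s := by
  rw [frontier, frontier, closure_smul₀' hc, interior_smul₀ hc, smul_set_sdiff₀ hc]

section Scaling

variable {E : Type*} [NormedAddCommGroup E] [NormedSpace ℝ E] [MeasurableSpace E] [BorelSpace E]
  {d t : ℝ}

theorem toReal_hausdorffMeasure_smul (hd : 0 ≤ d) (ht : 0 < t) (s : Set E) :
    (μH[d] (t • s)).toReal = t ^ d * (μH[d] s).toReal := by
  rw [Measure.hausdorffMeasure_smul₀ hd ht.ne', ENNReal.toReal_smul, NNReal.smul_def, smul_eq_mul,
    NNReal.coe_rpow, coe_nnnorm, Real.norm_of_nonneg ht.le]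

theorem measurePreserving_smul_hausdorffMeasure (hd : 0 ≤ d) (ht : t ≠ 0) :
    MeasurePreserving (t • · : E → E) ((‖t‖₊ ^ d : ℝ≥0) • μH[d]) μH[d] := by
  refine ⟨(continuous_const_smul t).measurable, Measure.ext fun s hs => ?_⟩
  rw [Measure.map_apply (continuous_const_smul t).measurable hs, Measure.smul_apply,
    Set.preimage_smul₀ ht, Measure.hausdorffMeasure_smul₀ hd (inv_ne_zero ht), smul_smul,
    nnnorm_inv, NNReal.inv_rpow, mul_inv_cancel₀ (NNReal.rpow_pos (nnnorm_pos.2 ht)).ne', one_smul]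

theorem setIntegral_smul_set_hausdorffMeasure {F : Type*} [NormedAddCommGroup F] [NormedSpace ℝ F]
    (hd : 0 ≤ d) (ht : 0 < t) (f : E → F) (s : Set E) :
    ∫ x in t • s, f x ∂μH[d] = t ^ d • ∫ x in s, f (t • x) ∂μH[d] := by
  rw [← Set.image_smul, (measurePreserving_smul_hausdorffMeasure hd ht.ne').setIntegral_image_emb
    (measurableEmbedding_const_smul₀ ht.ne') f s, Measure.restrict_smul, integral_smul_nnreal_measure,
    NNReal.smul_def, NNReal.coe_rpow, coe_nnnorm, Real.norm_of_nonneg ht.le]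

end Scaling

theorem eq_of_isLocalMin_rpow_add_inv {a D c : ℝ}
    (h : IsLocalMin (fun t : ℝ => t ^ a * D + c * t⁻¹) 1) : a * D = c := by
  have hderiv := ((Real.hasDerivAt_rpow_const (p := a) (Or.inl one_ne_zero)).mul_const D).fun_add
    ((hasDerivAt_inv one_ne_zero).const_mul c)
  have hzero := h.hasDerivAt_eq_zero hderiv
  simp only [Real.one_rpow, one_pow, inv_one, mul_one, mul_neg] at hzero
  linarith

section Plane

variable {t : ℝ}

theorem distInt_smul (p : ℝ) (ht : 0 < t) (Ω : Set Plane) :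
    distInt p (t • Ω) = t ^ (p + 2) * distInt p Ω := by
  have hdist (x : Plane) : infDist (t • x) (frontier (t • Ω)) ^ p
      = t ^ p * infDist x (frontier Ω) ^ p := by
    rw [frontier_smul₀ ht.ne', infDist_smul₀ ht.ne', Real.norm_of_nonneg ht.le,
      Real.mul_rpow ht.le infDist_nonneg]
  rw [distInt, setIntegral_smul_set_hausdorffMeasure zero_le_two ht]
  simp_rw [hdist]
  rw [integral_const_mul, distInt, smul_eq_mul, ← mul_assoc, ← Real.rpow_add ht, add_comm 2 p]

theorem perim_smul (ht : 0 < t) (Ω : Set Plane) : perim (t • Ω) = t * perim Ω := by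
  rw [perim, frontier_smul₀ ht.ne', toReal_hausdorffMeasure_smul zero_le_one ht, Real.rpow_one,
    perim]

theorem area_smul (ht : 0 < t) (Ω : Set Plane) : area (t • Ω) = t ^ 2 * area Ω := by
  rw [area, toReal_hausdorffMeasure_smul zero_le_two ht, Real.rpow_two, area]

theorem energy_smul (p lam : ℝ) (ht : 0 < t) (Ω : Set Plane) :
    energy p lam (t • Ω) = t ^ (p + 2) * distInt p Ω + lam * (perim Ω / area Ω) * t⁻¹ := by
  rw [energy, distInt_smul p ht, perim_smul ht, area_smul ht]
  field_simp

theorem Adm.smul {Ω : Set Plane} (h : Adm Ω) (ht : t ≠ 0) : Adm (t • Ω) := by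
  obtain ⟨hcompact, hconvex, hdim⟩ := h
  refine ⟨hcompact.smul t, hconvex.smul t, ?_⟩
  rw [← Set.image_smul]
  exact ((ContinuousLinearEquiv.smulLeft (R₁ := ℝ) (Units.mk0 t ht)).dimH_image Ω).trans hdim

end Plane

theorem stmt_17_general (p lam : ℝ) (hp : 1 ≤ p)
    (Ω : Set Plane) (hΩ : Adm Ω)
    (hmin : ∀ Ω' : Set Plane, Adm Ω' → energy p lam Ω ≤ energy p lam Ω') :
    distInt p Ω = (lam / (p + 2)) * (perim Ω / area Ω) := by
  have hscaling : IsLocalMin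
      (fun t : ℝ => t ^ (p + 2) * distInt p Ω + lam * (perim Ω / area Ω) * t⁻¹) 1 := by
    filter_upwards [Ioi_mem_nhds one_pos] with t ht
    calc _ = energy p lam Ω := by simp [energy]
      _ ≤ energy p lam (t • Ω) := hmin _ (hΩ.smul ht.ne')
      _ = _ := energy_smul p lam ht Ω
  have hstationary := eq_of_isLocalMin_rpow_add_inv hscaling
  rw [div_mul_eq_mul_div, eq_div_iff (by linarith), mul_comm, hstationary]

/-- every minimizer `Ω` of `E_{p,λ}` in `A` satisfies the stationarity identity
`∫_Ω dist(x,∂Ω)^p dx = (λ/(p+2)) H¹(∂Ω)/H²(Ω)`. -/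
theorem stmt_17 (p lam : ℝ) (hp : 1 ≤ p) (hlam : 0 < lam)
    (Ω : Set Plane) (hΩ : Adm Ω)
    (hmin : ∀ Ω' : Set Plane, Adm Ω' → energy p lam Ω ≤ energy p lam Ω') :
    distInt p Ω = (lam / (p + 2)) * (perim Ω / area Ω) :=
  stmt_17_general p lam hp Ω hΩ hmin
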